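/- Consider the FitzHugh–Nagumo system with c = 0, f(x, y) = -y + 4x - x³ and g_b(x, y) = x - b y, parametrized by b. At the parameter value b = 3/8 the equilibrium E₊ = (x₊, x₊/b) with x₊ = √(4 - 1/b) equals the fold point (2/√3, 16/(3√3)), and it is a regular singular fold: f(E₊) = 0, ∂f/∂x(E₊) = 0, ∂²f/∂x²(E₊) = -4√3 ≠ 0, ∂f/∂y(E₊) = -1 ≠ 0, g_b(E₊) = 0 at b = 3/8, ∂g_b/∂x(E₊) = 1 ≠ 0, and ∂g_b/∂b(E₊) = -16/(3√3) ≠ 0. -/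

import Mathlib

/-!
At `b = 3/8` one has `4 - 1/b = 4/3`, so `x₊ = 2/√3` is exactly the root of `f_x = 4 - 3x²`,
i.e. the fold of the cubic nullcline. All remaining claims are evaluations of explicit
polynomial derivatives at that point.
-/

/-- The FitzHugh–Nagumo fast equation `f(x,y) = -y + 4x - x³`. -/
noncomputable def fhnF (x y : ℝ) : ℝ := -y + 4*x - x^3

/-- The slow equation of the FitzHugh–Nagumo system with `c = 0`,
parametrized by `b`: `g_b(x,y) = x - b y`. -/
noncomputable def fhnGb (b x y : ℝ) : ℝ := x - b*y

lemma hasDerivAt_fhnF_fst (x y : ℝ) : HasDerivAt (fun x => fhnF x y) (4 - 3 * x ^ 2) x :=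
  ((((hasDerivAt_id x).const_mul 4).const_add (-y)).sub (hasDerivAt_pow 3 x)).congr_deriv
    (by simp)

lemma deriv_fhnF_fst (y : ℝ) : deriv (fun x => fhnF x y) = fun x => 4 - 3 * x ^ 2 :=
  funext fun x => (hasDerivAt_fhnF_fst x y).deriv

lemma deriv_deriv_fhnF_fst (x y : ℝ) : deriv (deriv (fun x => fhnF x y)) x = -(6 * x) := by
  rw [deriv_fhnF_fst, (((hasDerivAt_pow 2 x).const_mul 3).const_sub 4).deriv]
  ring

lemma deriv_fhnF_snd (x y : ℝ) : deriv (fun y => fhnF x y) y = -1 := by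
  simp [fhnF]

lemma deriv_fhnGb_fst (b x y : ℝ) : deriv (fun x => fhnGb b x y) x = 1 := by
  simp [fhnGb]

lemma deriv_fhnGb_param (b x y : ℝ) : deriv (fun b => fhnGb b x y) b = -y := by
  simp [fhnGb]

lemma sqrt_four_sub_inv_three_eighths : √(4 - 1 / (3 / 8) : ℝ) = 2 / √3 := by
  rw [show (4 - 1 / (3 / 8) : ℝ) = 4 / 3 by norm_num, Real.sqrt_div' _ (by norm_num : (0:ℝ) ≤ 3)]
  norm_num

/-- at the parameter value `b = 3/8`, the equilibrium
`E₊ = (x₊, x₊/b)` with `x₊ = √(4 - 1/b)` equals the fold point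
`(2/√3, 16/(3√3))` and is a regular singular fold of the FitzHugh–Nagumo
system with `c = 0`. -/
theorem fhn_c0_regular_singular_fold :
    let b₀ : ℝ := 3/8
    let xp : ℝ := Real.sqrt (4 - 1/b₀)
    let Ep : ℝ × ℝ := (xp, xp/b₀)
    Ep = (2/Real.sqrt 3, 16/(3*Real.sqrt 3)) ∧
    fhnF Ep.1 Ep.2 = 0 ∧
    deriv (fun x => fhnF x Ep.2) Ep.1 = 0 ∧
    deriv (deriv (fun x => fhnF x Ep.2)) Ep.1 = -(4*Real.sqrt 3) ∧
    deriv (deriv (fun x => fhnF x Ep.2)) Ep.1 ≠ 0 ∧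
    deriv (fun y => fhnF Ep.1 y) Ep.2 = -1 ∧
    deriv (fun y => fhnF Ep.1 y) Ep.2 ≠ 0 ∧
    fhnGb b₀ Ep.1 Ep.2 = 0 ∧
    deriv (fun x => fhnGb b₀ x Ep.2) Ep.1 = 1 ∧
    deriv (fun x => fhnGb b₀ x Ep.2) Ep.1 ≠ 0 ∧
    deriv (fun b => fhnGb b Ep.1 Ep.2) b₀ = -(16/(3*Real.sqrt 3)) ∧
    deriv (fun b => fhnGb b Ep.1 Ep.2) b₀ ≠ 0 := by
  intro b₀ xp Ep
  have hEp : Ep = (2 / √3, 16 / (3 * √3)) := by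
    simp only [Ep, xp, b₀, sqrt_four_sub_inv_three_eighths, Prod.mk.injEq, true_and]
    field_simp
    norm_num
  have hs : √3 ^ 2 = 3 := Real.sq_sqrt (by norm_num)
  have hfold : 4 - 3 * (2 / √3) ^ 2 = 0 := by field_simp; linarith
  rw [hEp]
  dsimp only
  have hfxx : deriv (deriv (fun x => fhnF x (16 / (3 * √3)))) (2 / √3) = -(4 * √3) := by
    rw [deriv_deriv_fhnF_fst]; field_simp; linarith
  have hgb : deriv (fun b => fhnGb b (2 / √3) (16 / (3 * √3))) b₀ = -(16 / (3 * √3)) :=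
    deriv_fhnGb_param ..
  refine ⟨rfl, ?_, by rw [deriv_fhnF_fst]; exact hfold, hfxx, by rw [hfxx]; simp, deriv_fhnF_snd ..,
    by rw [deriv_fhnF_snd]; norm_num, ?_, deriv_fhnGb_fst .., by rw [deriv_fhnGb_fst]; norm_num,
    hgb, by rw [hgb]; simp⟩
  · unfold fhnF; field_simp; linear_combination 8 * hs
  · unfold fhnGb b₀; field_simp; ring
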